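/- For every $m \geq 2$, the Gromov–Hausdorff distance between the unit circle $S^1$ with geodesic metric and the vertex set $P_m$ of the inscribed regular $m$-gon (with restricted geodesic metric) equals $\frac{\pi}{m}$. -/

import Mathlib

/-!
The vertices of the `m`-gon form a `π/m`-net of the circle, so `d_GH ≤ π/m`. Conversely they are
`m`-torsion points, hence pairwise at least `2π/m` apart. If a connected space `X` and a
`δ`-separated space `Y` sit at Hausdorff distance `< δ/2` in a common space, sending each point of
`X` to a nearby point of `Y` is locally constant and onto, hence constant; so as soon as `Y` has two
points, `d_GH(X, Y) ≥ δ/2`.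
-/

open Real

/-- Vertex set of the regular `n`-gon inscribed in the unit circle, modeled inside
`AddCircle (2π)` whose quotient metric is exactly the geodesic metric
`d(α,β) = min (|α-β|) (2π - |α-β|)`. -/
noncomputable def Pvert (n : ℕ) : Set (AddCircle (2 * π)) :=
  Set.range fun j : Fin n => ((2 * π * j / n : ℝ) : AddCircle (2 * π))

instance (n : ℕ) : Finite (Pvert n) := by unfold Pvert; exact (Set.finite_range _).to_subtype


instance (n : ℕ) [NeZero n] : Nonempty (Pvert n) := by
  unfold Pvert; exact ⟨⟨_, Set.mem_range_self (0 : Fin n)⟩⟩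

instance : Fact (0 < 2 * π) := ⟨by positivity⟩

namespace GromovHausdorff

variable {X Y : Type*} [MetricSpace X] [CompactSpace X] [Nonempty X]

theorem ghDist_subtype_le {s : Set X} [CompactSpace s] [Nonempty s] {r : ℝ}
    (h : ∀ x, ∃ y ∈ s, dist x y ≤ r) : ghDist X s ≤ r := by
  obtain ⟨y, -, hxy⟩ := h (Classical.arbitrary X)
  calc ghDist X s ≤ Metric.hausdorffDist (Set.range id) (Set.range ((↑) : s → X)) :=
        ghDist_le_hausdorffDist isometry_id isometry_subtype_coe
    _ ≤ r := by
        rw [Set.range_id, Subtype.range_coe]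
        refine Metric.hausdorffDist_le_of_mem_dist (dist_nonneg.trans hxy) (fun x _ ↦ h x) ?_
        exact fun y _ ↦ ⟨y, Set.mem_univ y, by simpa using dist_nonneg.trans hxy⟩

theorem le_two_mul_ghDist_of_separated [PreconnectedSpace X] [MetricSpace Y] [CompactSpace Y]
    [Nonempty Y] [Nontrivial Y] {δ : ℝ} (hY : ∀ y y' : Y, y ≠ y' → δ ≤ dist y y') :
    δ ≤ 2 * ghDist X Y := by
  by_contra! hlt
  obtain ⟨r, hDr, hrδ⟩ : ∃ r, ghDist X Y < r ∧ 2 * r < δ :=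
    ⟨(ghDist X Y + δ / 2) / 2, by linarith, by linarith⟩
  set f := optimalGHInjl X Y
  set g := optimalGHInjr X Y
  have hf : Isometry f := isometry_optimalGHInjl X Y
  have hg : Isometry g := isometry_optimalGHInjr X Y
  have hH : Metric.hausdorffDist (Set.range f) (Set.range g) < r := by
    rwa [hausdorffDist_optimal]
  have hfin : Metric.hausdorffEDist (Set.range f) (Set.range g) ≠ ⊤ :=
    Metric.hausdorffEDist_ne_top_of_nonempty_of_bounded (Set.range_nonempty _)
      (Set.range_nonempty _) (isCompact_range hf.continuous).isBounded
      (isCompact_range hg.continuous).isBounded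
  have hfg : ∀ x, ∃ y, dist (f x) (g y) < r := fun x ↦ by
    obtain ⟨_, ⟨y, rfl⟩, hy⟩ :=
      Metric.exists_dist_lt_of_hausdorffDist_lt (Set.mem_range_self x) hH hfin
    exact ⟨y, hy⟩
  have hgf : ∀ y, ∃ x, dist (f x) (g y) < r := fun y ↦ by
    obtain ⟨_, ⟨x, rfl⟩, hx⟩ :=
      Metric.exists_dist_lt_of_hausdorffDist_lt' (Set.mem_range_self y) hH hfin
    exact ⟨x, hx⟩
  choose φ hφ using hfg
  have eq_of_dist_lt : ∀ y y' : Y, dist (g y) (g y') < δ → y = y' := fun y y' h ↦ by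
    by_contra hne
    exact (hY y y' hne).not_gt (hg.dist_eq y y' ▸ h)
  have hloc : IsLocallyConstant φ := by
    refine (IsLocallyConstant.iff_eventually_eq φ).2 fun x ↦ ?_
    filter_upwards [Metric.ball_mem_nhds x (sub_pos.2 hrδ)] with x' hx'
    refine eq_of_dist_lt _ _ ?_
    have := dist_triangle4 (g (φ x')) (f x') (f x) (g (φ x))
    rw [hf.dist_eq, dist_comm (g (φ x')) (f x')] at this
    linarith [hφ x, hφ x', Metric.mem_ball.1 hx']
  have hsurj : Function.Surjective φ := fun y ↦ by
    obtain ⟨x, hx⟩ := hgf y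
    refine ⟨x, eq_of_dist_lt _ _ ?_⟩
    have := dist_triangle (g (φ x)) (f x) (g y)
    rw [dist_comm (g (φ x)) (f x)] at this
    linarith [hφ x]
  obtain ⟨y, y', hne⟩ := exists_pair_ne Y
  obtain ⟨x, rfl⟩ := hsurj y
  obtain ⟨x', rfl⟩ := hsurj y'
  exact hne (hloc.apply_eq_of_preconnectedSpace x x')

end GromovHausdorff

namespace AddCircle

variable {p : ℝ}

theorem div_le_norm_of_nsmul_eq_zero [Fact (0 < p)] {u : AddCircle p} {m : ℕ} (hu : m • u = 0)
    (hu0 : u ≠ 0) : p / m ≤ ‖u‖ := by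
  rcases m.eq_zero_or_pos with rfl | hm
  · simp
  have hfin : IsOfFinAddOrder u := isOfFinAddOrder_iff_nsmul_eq_zero.2 ⟨m, hm, hu⟩
  have hord : (addOrderOf u : ℝ) ≤ m := by
    exact_mod_cast Nat.le_of_dvd hm (addOrderOf_dvd_of_nsmul_eq_zero hu)
  rw [div_le_iff₀ (by positivity), mul_comm]
  calc p ≤ addOrderOf u • ‖u‖ := le_add_order_smul_norm_of_isOfFinAddOrder hfin hu0
    _ = addOrderOf u * ‖u‖ := nsmul_eq_mul _ _
    _ ≤ m * ‖u‖ := by gcongr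

theorem exists_dist_zsmul_le {q : ℝ} (hq : 0 < q) (x : AddCircle p) :
    ∃ k : ℤ, dist x (k • (q : AddCircle p)) ≤ q / 2 := by
  obtain ⟨θ, rfl⟩ := QuotientAddGroup.mk_surjective x
  refine ⟨round (θ / q), ?_⟩
  rw [← coe_zsmul, dist_eq_norm, ← coe_sub, zsmul_eq_mul]
  calc ‖((θ - round (θ / q) * q : ℝ) : AddCircle p)‖ ≤ |θ - round (θ / q) * q| :=
        QuotientAddGroup.norm_mk_le_norm
    _ = q * |θ / q - round (θ / q)| := by
        rw [← abs_of_pos hq, ← abs_mul, abs_of_pos hq, mul_sub, mul_div_cancel₀ _ hq.ne',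
          mul_comm]
    _ ≤ q * (1 / 2) := by gcongr; exact abs_sub_round _
    _ = q / 2 := by ring

end AddCircle

theorem nsmul_eq_zero_of_mem_Pvert {m : ℕ} {x : AddCircle (2 * π)} (hx : x ∈ Pvert m) :
    m • x = 0 := by
  obtain ⟨j, rfl⟩ := hx
  rcases eq_or_ne m 0 with rfl | hm
  · simp
  rw [← AddCircle.coe_nsmul, nsmul_eq_mul, mul_div_cancel₀ _ (by exact_mod_cast hm),
    AddCircle.coe_eq_zero_iff]
  exact ⟨j, by rw [zsmul_eq_mul]; push_cast; ring⟩

theorem zsmul_mem_Pvert {m : ℕ} (hm : m ≠ 0) (k : ℤ) :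
    k • ((2 * π / m : ℝ) : AddCircle (2 * π)) ∈ Pvert m := by
  have hm' : (0 : ℤ) < m := by exact_mod_cast hm.bot_lt
  have hg : m • ((2 * π / m : ℝ) : AddCircle (2 * π)) = 0 := by
    rw [← AddCircle.coe_nsmul, nsmul_eq_mul, mul_div_cancel₀ _ (by exact_mod_cast hm),
      AddCircle.coe_period]
  have hmod := Int.emod_nonneg k hm'.ne'
  refine ⟨⟨(k % m).toNat, by have := Int.emod_lt_of_pos k hm'; omega⟩, ?_⟩
  have hk : k = (k % m).toNat + k / m * m := by
    rw [Int.toNat_of_nonneg hmod]; linarith [Int.emod_add_mul_ediv k m]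
  conv_rhs => rw [hk, add_zsmul, mul_zsmul, natCast_zsmul, natCast_zsmul, hg, zsmul_zero, add_zero]
  rw [← AddCircle.coe_nsmul, nsmul_eq_mul]
  exact congrArg _ (by ring)

theorem two_pi_div_le_dist_of_mem_Pvert {m : ℕ} {x y : AddCircle (2 * π)} (hx : x ∈ Pvert m)
    (hy : y ∈ Pvert m) (hxy : x ≠ y) : 2 * π / m ≤ dist x y := by
  rw [dist_eq_norm]
  refine AddCircle.div_le_norm_of_nsmul_eq_zero ?_ (sub_ne_zero.2 hxy)
  rw [nsmul_sub, nsmul_eq_zero_of_mem_Pvert hx, nsmul_eq_zero_of_mem_Pvert hy, sub_zero]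

theorem exists_mem_Pvert_dist_le {m : ℕ} (hm : m ≠ 0) (x : AddCircle (2 * π)) :
    ∃ y ∈ Pvert m, dist x y ≤ π / m := by
  obtain ⟨k, hk⟩ := AddCircle.exists_dist_zsmul_le (q := 2 * π / m) (by positivity) x
  exact ⟨_, zsmul_mem_Pvert hm k, hk.trans_eq (by ring)⟩

theorem nontrivial_Pvert {m : ℕ} (hm : 2 ≤ m) : Nontrivial (Pvert m) := by
  have hm0 : m ≠ 0 := by omega
  refine nontrivial_of_ne ⟨_, zsmul_mem_Pvert hm0 0⟩ ⟨_, zsmul_mem_Pvert hm0 1⟩ ?_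
  rw [ne_eq, Subtype.mk.injEq, zero_zsmul, one_zsmul, eq_comm,
    AddCircle.coe_eq_zero_iff_of_mem_Ico]
  · positivity
  · have : (2 : ℝ) ≤ m := by exact_mod_cast hm
    constructor
    · positivity
    · rw [div_lt_iff₀ (by positivity)]
      nlinarith [pi_pos]

theorem stmt14 (m : ℕ) (hm : 2 ≤ m) :
    haveI : NeZero m := ⟨by omega⟩
    GromovHausdorff.ghDist (AddCircle (2 * π)) (Pvert m) = π / m := by
  have : NeZero m := ⟨by omega⟩
  have := nontrivial_Pvert hm
  refine le_antisymm (GromovHausdorff.ghDist_subtype_le (exists_mem_Pvert_dist_le (NeZero.ne m))) ?_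
  have := GromovHausdorff.le_two_mul_ghDist_of_separated (X := AddCircle (2 * π)) (Y := Pvert m)
    fun x y hxy ↦ two_pi_div_le_dist_of_mem_Pvert x.2 y.2 (Subtype.coe_ne_coe.2 hxy)
  linarith [mul_div_assoc 2 π (m : ℝ)]
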